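/- arXiv:1711.03081 — 2 statements merged into one kernel-verified Lean document; each statement's English description precedes it below -/
import Mathlib

section
/- Gronwall-type differential inequality closure: suppose D : [0,T] → [0,∞) is differentiable and satisfies D'(t) ≤ (λ + α)D(t) + (C/α)(|log r|² (M + r^{−(2+d)}λ^{−2}D(t))² + M(M + r^{−(2+d)}λ^{−2}D(t))) λ^{−2} D(t) ε^{−4} for all t with D(t) ≤ λ² r^{2+d}, where r ∈ (0,1), ε, M, λ, α, C > 0. If α = C' λ^{−1} ε^{−2} |log r| M and λ = C'' ε^{−1}|log r|^{1/2} M^{1/2} (for suitable constants C', C'' depending only on C), then as long as D(t) ≤ λ² r^{d+2} on [0,t], one has D(t) ≤ D(0) exp(C''' ε^{−1} |log r|^{1/2} M^{1/2} t). -/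
/-!
With `λ = ε⁻¹ |log r|^{1/2} M^{1/2}` and `α = λ⁻¹ ε⁻² |log r| M = λ`, the constraint
`D ≤ λ² r^{2+d}` says exactly that the correction `X = r^{-(2+d)} λ⁻² D` is at most `1`.
Since `M ≥ 1` and `|log r| ≥ 1` (as `r ≤ e⁻¹`), the bracket is then at most `6 |log r|² M²`,
and the nonlinear term is at most `6 C |log r|² M² ε⁻⁴ λ⁻³ D = 6 C λ D`. Hence
`D' ≤ (2 + 6C) λ D`, and Grönwall's inequality gives the exponential rate `C''' = 2 + 6C`.
-/

open Real Set

theorem le_mul_exp_of_hasDerivAt_le_mul {f f' : ℝ → ℝ} {K a b : ℝ}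
    (hf : ∀ x ∈ Icc a b, HasDerivAt f (f' x) x) (bound : ∀ x ∈ Ico a b, f' x ≤ K * f x) :
    ∀ x ∈ Icc a b, f x ≤ f a * exp (K * (x - a)) := by
  intro x hx
  rw [← gronwallBound_ε0]
  refine le_gronwallBound_of_liminf_deriv_right_le
    (fun y hy ↦ (hf y hy).continuousAt.continuousWithinAt) (fun y hy _ hr ↦ ?_) le_rfl
    (fun y hy ↦ by simpa using bound y hy) x hx
  simpa [slope_def_field, div_eq_inv_mul] using
    (hf y (Ico_subset_Icc_self hy)).hasDerivWithinAt.liminf_right_slope_le hr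

theorem one_le_abs_log_of_le_exp_neg_one {r : ℝ} (hr : 0 < r) (hre : r ≤ exp (-1)) :
    1 ≤ |log r| := by
  have : log r ≤ -1 := by simpa using log_le_log hr hre
  rw [abs_of_neg (by linarith)]
  linarith

theorem rpow_neg_mul_inv_sq_mul_le_one {r lam D p : ℝ} (hr : 0 < r) (hlam : lam ≠ 0)
    (hD : D ≤ lam ^ 2 * r ^ p) : r ^ (-p) * lam⁻¹ ^ 2 * D ≤ 1 := by
  have hrp : 0 < r ^ p := rpow_pos_of_pos hr p
  calc r ^ (-p) * lam⁻¹ ^ 2 * D ≤ r ^ (-p) * lam⁻¹ ^ 2 * (lam ^ 2 * r ^ p) := by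
        gcongr
    _ = 1 := by rw [rpow_neg hr.le]; field_simp

theorem sq_mul_sq_add_mul_le {L M X : ℝ} (hL : 1 ≤ L) (hM : 1 ≤ M) (hX₀ : 0 ≤ X)
    (hX₁ : X ≤ 1) :
    L ^ 2 * (M + X) ^ 2 + M * (M + X) ≤ 6 * L ^ 2 * M ^ 2 := by
  have hMX : M + X ≤ 2 * M := by linarith
  have h₁ : (M + X) ^ 2 ≤ 4 * M ^ 2 := by nlinarith
  have hL₂ : 1 ≤ L ^ 2 := one_le_pow₀ hL
  have h₂ : M * (M + X) ≤ 2 * L ^ 2 * M ^ 2 := by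
    nlinarith [mul_le_mul_of_nonneg_left hMX (by linarith : (0 : ℝ) ≤ M)]
  nlinarith [mul_le_mul_of_nonneg_left h₁ (sq_nonneg L)]

theorem div_mul_inv_sq_mul_le {C L M ε lam B D : ℝ} (hC : 0 ≤ C) (hD : 0 ≤ D) (hlam : 0 < lam)
    (hlam_sq : lam ^ 2 = ε⁻¹ ^ 2 * L * M) (hB : B ≤ 6 * L ^ 2 * M ^ 2) :
    (C / lam) * B * lam⁻¹ ^ 2 * D * ε⁻¹ ^ 4 ≤ 6 * C * lam * D := by
  calc (C / lam) * B * lam⁻¹ ^ 2 * D * ε⁻¹ ^ 4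
      ≤ (C / lam) * (6 * L ^ 2 * M ^ 2) * lam⁻¹ ^ 2 * D * ε⁻¹ ^ 4 := by gcongr
    _ = 6 * C * lam⁻¹ ^ 3 * (ε⁻¹ ^ 2 * L * M) ^ 2 * D := by ring
    _ = 6 * C * lam * D := by rw [← hlam_sq]; field_simp

/-- Gronwall-type differential inequality closure for the mean-field estimate: for every
`C > 0` there exist constants `C', C'', C''' > 0` (depending only on `C`) such that for any
dimension `d`, parameters `0 < r ≤ e^{−1}`, `ε > 0`, `M ≥ 1`, `T > 0`, any differentiable
`D : [0,T] → [0,∞)` satisfying the differential inequality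
`D' ≤ (λ + α)D + (C/α)(|log r|²(M + r^{−(2+d)}λ^{−2}D)² + M(M + r^{−(2+d)}λ^{−2}D))λ^{−2}Dε^{−4}`
whenever `D ≤ λ²r^{2+d}`, with `α = C'λ^{−1}ε^{−2}|log r|M` and
`λ = C''ε^{−1}|log r|^{1/2}M^{1/2}`: as long as `D ≤ λ²r^{d+2}` on `[0,t]`, one has
`D(t) ≤ D(0) exp(C''' ε^{−1}|log r|^{1/2}M^{1/2} t)`. -/
theorem gronwall_closure (C : ℝ) (hC : 0 < C) :
    ∃ C' C'' C''' : ℝ, 0 < C' ∧ 0 < C'' ∧ 0 < C''' ∧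
      ∀ (d : ℕ) (r ε M lam alpha T : ℝ) (D D' : ℝ → ℝ),
        0 < r → r ≤ Real.exp (-1) → 0 < ε → 1 ≤ M → 0 < T →
        alpha = C' * lam⁻¹ * ε⁻¹ ^ 2 * |Real.log r| * M →
        lam = C'' * ε⁻¹ * Real.sqrt |Real.log r| * Real.sqrt M →
        (∀ t ∈ Set.Icc (0 : ℝ) T, 0 ≤ D t) →
        (∀ t ∈ Set.Icc (0 : ℝ) T, HasDerivAt D (D' t) t) →
        (∀ t ∈ Set.Icc (0 : ℝ) T, D t ≤ lam ^ 2 * r ^ (2 + (d : ℝ)) →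
          D' t ≤ (lam + alpha) * D t +
            (C / alpha) *
              (|Real.log r| ^ 2 * (M + r ^ (-(2 + (d : ℝ))) * lam⁻¹ ^ 2 * D t) ^ 2 +
                M * (M + r ^ (-(2 + (d : ℝ))) * lam⁻¹ ^ 2 * D t)) *
              lam⁻¹ ^ 2 * D t * ε⁻¹ ^ 4) →
        ∀ t ∈ Set.Icc (0 : ℝ) T,
          (∀ s ∈ Set.Icc (0 : ℝ) t, D s ≤ lam ^ 2 * r ^ ((d : ℝ) + 2)) →
          D t ≤ D 0 *
            Real.exp (C''' * ε⁻¹ * Real.sqrt |Real.log r| * Real.sqrt M * t) := by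
  refine ⟨1, 1, 2 + 6 * C, one_pos, one_pos, by positivity, ?_⟩
  intro d r ε M lam alpha T D D' hr hre hε hM _ halpha hlam hD₀ hD' hineq t ht hbd
  have hL := one_le_abs_log_of_le_exp_neg_one hr hre
  have hlam_pos : 0 < lam := by
    rw [hlam]
    have := sqrt_pos.2 (by linarith : (0 : ℝ) < |log r|)
    have := sqrt_pos.2 (by linarith : (0 : ℝ) < M)
    positivity
  have hlam_sq : lam ^ 2 = ε⁻¹ ^ 2 * |log r| * M := by
    rw [hlam, mul_pow, mul_pow, mul_pow, sq_sqrt (abs_nonneg _), sq_sqrt (by linarith)]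
    ring
  have halpha_eq : alpha = lam := by
    rw [halpha, one_mul, mul_assoc, mul_assoc, ← mul_assoc (ε⁻¹ ^ 2), ← hlam_sq]
    field_simp
  have hmem : ∀ x ∈ Icc 0 t, x ∈ Icc 0 T := fun x hx ↦ ⟨hx.1, hx.2.trans ht.2⟩
  have hbound : ∀ x ∈ Ico 0 t, D' x ≤ (2 + 6 * C) * lam * D x := by
    intro x hx
    have hxT := hmem x (Ico_subset_Icc_self hx)
    have hDx₀ := hD₀ x hxT
    have hDx : D x ≤ lam ^ 2 * r ^ (2 + (d : ℝ)) := by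
      rw [add_comm]; exact hbd x (Ico_subset_Icc_self hx)
    have hX₀ : 0 ≤ r ^ (-(2 + (d : ℝ))) * lam⁻¹ ^ 2 * D x := by positivity
    have hX₁ := rpow_neg_mul_inv_sq_mul_le_one hr hlam_pos.ne' hDx
    have hnonlin := div_mul_inv_sq_mul_le hC.le hDx₀ hlam_pos hlam_sq
      (sq_mul_sq_add_mul_le hL hM hX₀ hX₁)
    have := hineq x hxT hDx
    rw [halpha_eq] at this
    linarith
  have := le_mul_exp_of_hasDerivAt_le_mul (fun x hx ↦ hD' x (hmem x hx)) hbound t ⟨ht.1, le_rfl⟩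
  convert this using 3
  rw [hlam]
  ring
end

section
/- Truncated-distance Gronwall bound: let D : [0,T] → [0,∞) be continuous with D(t) ≤ D(0) e^{Kt} whenever sup_{s≤t} D(s) ≤ B, for constants K, B > 0. Define D̂(t) = min{1, B^{−1} sup_{s∈[0,t]} D(s)}. Then D̂(t) ≤ D̂(0) e^{Kt} for all t ∈ [0,T]. -/
/-- Truncated-distance Gronwall bound: let `D : [0,T] → [0,∞)` be continuous and satisfy
`D(t) ≤ D(0) e^{Kt}` whenever `sup_{s ≤ t} D(s) ≤ B`, for constants `K, B > 0`.  Define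
`D̂(t) = min{1, B^{−1} sup_{s ∈ [0,t]} D(s)}`.  Then `D̂(t) ≤ D̂(0) e^{Kt}` for all
`t ∈ [0,T]`. -/
theorem truncated_gronwall (T K B : ℝ) (hT : 0 ≤ T) (hK : 0 < K) (hB : 0 < B)
    (D : ℝ → ℝ) (hcont : ContinuousOn D (Set.Icc 0 T))
    (hnn : ∀ t ∈ Set.Icc (0 : ℝ) T, 0 ≤ D t)
    (hG : ∀ t ∈ Set.Icc (0 : ℝ) T, (∀ s ∈ Set.Icc (0 : ℝ) t, D s ≤ B) →
      D t ≤ D 0 * Real.exp (K * t)) :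
    ∀ t ∈ Set.Icc (0 : ℝ) T,
      min 1 (B⁻¹ * sSup (D '' Set.Icc 0 t)) ≤ min 1 (B⁻¹ * D 0) * Real.exp (K * t) := by
  intro t ht
  have hD0nn : 0 ≤ D 0 := hnn 0 ⟨le_rfl, hT⟩
  have hexp1 : (1 : ℝ) ≤ Real.exp (K * t) :=
    Real.one_le_exp (mul_nonneg hK.le ht.1)
  by_cases hcase : 1 ≤ min 1 (B⁻¹ * D 0) * Real.exp (K * t)
  · exact le_trans (min_le_left _ _) hcase
  push_neg at hcase
  have hD0B : B⁻¹ * D 0 < 1 := by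
    by_contra h
    push_neg at h
    rw [min_eq_left h] at hcase
    linarith
  rw [min_eq_right hD0B.le] at hcase ⊢
  have hIccsub : Set.Icc (0 : ℝ) t ⊆ Set.Icc 0 T := Set.Icc_subset_Icc le_rfl ht.2
  have hD0ltB : D 0 * Real.exp (K * t) < B := by
    have h1 : B * (B⁻¹ * D 0 * Real.exp (K * t)) < B * 1 :=
      mul_lt_mul_of_pos_left hcase hB
    have h2 : B * (B⁻¹ * D 0 * Real.exp (K * t)) = D 0 * Real.exp (K * t) := by
      field_simp
    linarith
  -- Key claim: D stays strictly below B on [0, t]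
  have key : ∀ s ∈ Set.Icc (0 : ℝ) t, D s < B := by
    by_contra h
    push_neg at h
    obtain ⟨s₁, hs₁, hBs₁⟩ := h
    have hUclosed : IsClosed (Set.Icc (0 : ℝ) t ∩ D ⁻¹' Set.Ici B) :=
      (hcont.mono hIccsub).preimage_isClosed_of_isClosed isClosed_Icc isClosed_Ici
    have hUcomp : IsCompact (Set.Icc (0 : ℝ) t ∩ D ⁻¹' Set.Ici B) :=
      isCompact_Icc.of_isClosed_subset hUclosed Set.inter_subset_left
    obtain ⟨s₀, hs₀U, hmin⟩ := hUcomp.exists_isLeast ⟨s₁, hs₁, hBs₁⟩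
    obtain ⟨hs₀mem, hBs₀⟩ := hs₀U
    have hBs₀' : B ≤ D s₀ := hBs₀
    have hD0lt : D 0 < B :=
      lt_of_le_of_lt (le_mul_of_one_le_right hD0nn hexp1) hD0ltB
    have hs₀pos : 0 < s₀ := by
      rcases hs₀mem.1.lt_or_eq with h | h
      · exact h
      · exfalso; rw [← h] at hBs₀'; linarith
    have hlt : ∀ u ∈ Set.Ico (0 : ℝ) s₀, D u < B := by
      intro u hu
      by_contra h'
      push_neg at h'
      exact absurd (hmin ⟨⟨hu.1, hu.2.le.trans hs₀mem.2⟩, h'⟩) (not_le.mpr hu.2)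
    have hsub2 : Set.Ioo (0 : ℝ) s₀ ⊆ Set.Icc 0 T := fun u hu =>
      ⟨hu.1.le, hu.2.le.trans (hs₀mem.2.trans ht.2)⟩
    have : Filter.NeBot (nhdsWithin s₀ (Set.Ioo (0 : ℝ) s₀)) :=
      right_nhdsWithin_Ioo_neBot hs₀pos
    have htend : Filter.Tendsto D (nhdsWithin s₀ (Set.Ioo (0 : ℝ) s₀)) (nhds (D s₀)) :=
      (hcont s₀ (hIccsub hs₀mem)).mono_left (nhdsWithin_mono _ hsub2)
    have hDs₀leB : D s₀ ≤ B :=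
      le_of_tendsto htend (Filter.eventually_of_mem self_mem_nhdsWithin
        fun u hu => (hlt u ⟨hu.1.le, hu.2⟩).le)
    have hcond : ∀ u ∈ Set.Icc (0 : ℝ) s₀, D u ≤ B := by
      intro u hu
      rcases hu.2.lt_or_eq with h | h
      · exact (hlt u ⟨hu.1, h⟩).le
      · rw [h]; exact hDs₀leB
    have hGs : D s₀ ≤ D 0 * Real.exp (K * s₀) := hG s₀ (hIccsub hs₀mem) hcond
    have hle : D 0 * Real.exp (K * s₀) ≤ D 0 * Real.exp (K * t) :=
      mul_le_mul_of_nonneg_left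
        (Real.exp_le_exp.mpr (mul_le_mul_of_nonneg_left hs₀mem.2 hK.le)) hD0nn
    linarith
  -- Conclusion
  have hbound : ∀ x ∈ D '' Set.Icc 0 t, x ≤ D 0 * Real.exp (K * t) := by
    rintro x ⟨s, hs, rfl⟩
    have hGs : D s ≤ D 0 * Real.exp (K * s) :=
      hG s (hIccsub hs) (fun u hu => (key u ⟨hu.1, hu.2.trans hs.2⟩).le)
    have hle : D 0 * Real.exp (K * s) ≤ D 0 * Real.exp (K * t) :=
      mul_le_mul_of_nonneg_left
        (Real.exp_le_exp.mpr (mul_le_mul_of_nonneg_left hs.2 hK.le)) hD0nn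
    linarith
  have hsup : sSup (D '' Set.Icc 0 t) ≤ D 0 * Real.exp (K * t) :=
    Real.sSup_le hbound (by positivity)
  calc min 1 (B⁻¹ * sSup (D '' Set.Icc 0 t)) ≤ B⁻¹ * sSup (D '' Set.Icc 0 t) :=
        min_le_right _ _
    _ ≤ B⁻¹ * (D 0 * Real.exp (K * t)) :=
        mul_le_mul_of_nonneg_left hsup (inv_nonneg.mpr hB.le)
    _ = B⁻¹ * D 0 * Real.exp (K * t) := by ring
end
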